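/- The largest eigenvalue μ of the Laplacian matrix of the graph F strictly exceeds max over all pairs of adjacent vertices v ~ j of (m_v² + 4·m_v·m_j + m_j² − (d_v·m_v + d_j·m_j))/(d_v + d_j). (This gives a counterexample to conjectured bound 66 of Brankov, Hansen and Stevanović.) -/

import Mathlib

/-- The edge list of the graph. -/
def edgeList : List (Fin 20 × Fin 20) :=
  [(0,2),(0,4),(0,7),(0,11),(1,2),(1,7),(1,8),(1,16),(2,10),(3,11),(3,19),(4,5),(4,12),(5,9),(6,13),(6,18),(7,12),(7,15),(7,18),(8,13),(8,15),(9,14),(10,17),(11,15),(12,19),(14,16),(15,16),(17,18)]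

/-- The graph under consideration. -/
def G : SimpleGraph (Fin 20) where
  Adj v w := (v, w) ∈ edgeList ∨ (w, v) ∈ edgeList
  symm := ⟨fun _ _ h => Or.symm h⟩
  loopless := ⟨by intro v; fin_cases v <;> decide⟩

instance : DecidableRel G.Adj :=
  fun v w => inferInstanceAs (Decidable ((v, w) ∈ edgeList ∨ (w, v) ∈ edgeList))

/-- `d v` is the degree of the vertex `v`, as a real number. -/
noncomputable def d (v : Fin 20) : ℝ := G.degree v

/-- `m v` is the average of the degrees of the neighbours of `v`. -/
noncomputable def m (v : Fin 20) : ℝ :=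
  (∑ u ∈ G.neighborFinset v, (G.degree u : ℝ)) / d v

open Matrix in
/-- An integer test vector (an approximation of the top Laplacian eigenvector). -/
def xz : Fin 20 → ℤ := ![-5,-6,3,-1,2,0,1,10,3,0,-1,3,-3,-1,-1,-6,3,1,-3,1]

/-- The real version of the test vector. -/
noncomputable def xv : Fin 20 → ℝ := fun i => (xz i : ℝ)

open Matrix

lemma hentry (i j : Fin 20) : (G.lapMatrix ℝ) i j = ((G.lapMatrix ℤ i j : ℤ) : ℝ) := by
  simp [SimpleGraph.lapMatrix, SimpleGraph.degMatrix, SimpleGraph.adjMatrix,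
    Matrix.sub_apply, Matrix.diagonal, Matrix.of_apply]

lemma hQ : xv ⬝ᵥ (G.lapMatrix ℝ *ᵥ xv) = 1892 := by
  have hz : xz ⬝ᵥ (G.lapMatrix ℤ *ᵥ xz) = 1892 := by decide
  have : xv ⬝ᵥ (G.lapMatrix ℝ *ᵥ xv) = ((xz ⬝ᵥ (G.lapMatrix ℤ *ᵥ xz) : ℤ) : ℝ) := by
    simp only [dotProduct, Matrix.mulVec, xv, hentry]
    push_cast
    ring
  rw [this, hz]; norm_num

lemma hSnorm : xv ⬝ᵥ xv = 262 := by
  have hz : xz ⬝ᵥ xz = 262 := by decide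
  have : xv ⬝ᵥ xv = ((xz ⬝ᵥ xz : ℤ) : ℝ) := by
    simp only [dotProduct, xv]; push_cast; ring
  rw [this, hz]; norm_num

/-- Rayleigh-quotient lower bound for the top eigenvalue. -/
lemma rayleigh (μ : ℝ)
    (hmax : ∀ ν ∈ spectrum ℝ (G.lapMatrix ℝ), ν ≤ μ)
    (x : Fin 20 → ℝ) : x ⬝ᵥ (G.lapMatrix ℝ *ᵥ x) ≤ μ * (x ⬝ᵥ x) := by
  have hL : (G.lapMatrix ℝ).IsHermitian := (SimpleGraph.posSemidef_lapMatrix ℝ G).1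
  have hB : (algebraMap ℝ (Matrix (Fin 20) (Fin 20) ℝ) μ - G.lapMatrix ℝ).IsHermitian := by
    refine Matrix.IsHermitian.sub ?_ hL
    rw [Algebra.algebraMap_eq_smul_one]
    simp [Matrix.IsHermitian, Matrix.conjTranspose_smul]
  have hnn : ∀ i, 0 ≤ hB.eigenvalues i := by
    intro i
    have hmem' := hB.eigenvalues_mem_spectrum_real i
    rw [← spectrum.singleton_sub_eq] at hmem'
    obtain ⟨a, ha, b, hb, hab⟩ := Set.mem_sub.mp hmem'
    rw [Set.mem_singleton_iff] at ha
    subst ha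
    have := hmax b hb
    linarith [hab]
  have hPSD := hB.posSemidef_iff_eigenvalues_nonneg.mpr hnn
  have h0 := hPSD.dotProduct_mulVec_nonneg x
  rw [star_trivial, Matrix.sub_mulVec, Algebra.algebraMap_eq_smul_one,
    Matrix.smul_mulVec, Matrix.one_mulVec, dotProduct_sub,
    dotProduct_smul, smul_eq_mul] at h0
  linarith

/-- The degrees of the vertices. -/
def dz : Fin 20 → ℕ := ![4, 4, 3, 2, 3, 2, 2, 5, 3, 2, 2, 3, 3, 2, 2, 4, 3, 2, 3, 2]

/-- The sums of degrees over neighbourhoods. -/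
def sz : Fin 20 → ℕ := ![14, 14, 10, 5, 9, 5, 5, 18, 10, 4, 5, 10, 10, 5, 5, 14, 10, 5, 9, 5]

lemma hd (v : Fin 20) : d v = (dz v : ℝ) := by
  have : G.degree v = dz v := by revert v; decide
  rw [d, this]

lemma hm (v : Fin 20) : m v = (sz v : ℝ) / (dz v : ℝ) := by
  have h1 : (∑ u ∈ G.neighborFinset v, G.degree u) = sz v := by revert v; decide
  rw [m, hd, ← Nat.cast_sum, h1]

set_option maxHeartbeats 1600000 in
lemma mySupLe : (Finset.univ.filter fun p : _ × _ => G.Adj p.1 p.2).sup' (by decide)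
      (fun p => (m p.1 ^ 2 + 4 * m p.1 * m p.2 + m p.2 ^ 2 - (d p.1 * m p.1 + d p.2 * m p.2)) / (d p.1 + d p.2)) ≤ 257/36 := by
  apply Finset.sup'_le
  intro p hp
  rw [Finset.mem_filter] at hp
  obtain ⟨a, b⟩ := p
  rcases hp.2 with h | h <;> fin_cases h <;>
    · simp only [hd, hm, dz, sz]
      norm_num

theorem laplacian_spectral_radius_exceeds_bound (μ : ℝ)
    (hmem : μ ∈ spectrum ℝ (G.lapMatrix ℝ))
    (hmax : ∀ ν ∈ spectrum ℝ (G.lapMatrix ℝ), ν ≤ μ) :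
    (Finset.univ.filter fun p : _ × _ => G.Adj p.1 p.2).sup' (by decide)
      (fun p => (m p.1 ^ 2 + 4 * m p.1 * m p.2 + m p.2 ^ 2 - (d p.1 * m p.1 + d p.2 * m p.2)) / (d p.1 + d p.2)) < μ := by
  have hr := rayleigh μ hmax xv
  rw [hQ, hSnorm] at hr
  have hμ : (257:ℝ)/36 < μ := by linarith
  exact lt_of_le_of_lt mySupLe hμ
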